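/- arXiv:2412.06986 — 4 statements merged into one kernel-verified Lean document; each statement's English description precedes it below -/
import Mathlib

section
/- Let α and β be orientation-preserving homeomorphisms of the circle S¹ such that the fixed-point sets Fix(α) and Fix(β) are finite, nonempty, and disjoint, and such that every fixed point of α and every fixed point of β is either attracting or repelling (i.e., α and β act with multi sink-source dynamics). Let p ∈ S¹, and let I ⊆ S¹ be a nonempty open arc containing at least one fixed point of α and at least one fixed point of β. Then there exists an element g of the subgroup of the homeomorphism group of S¹ generated by α and β such that g(p) ∈ I. -/
open Filter Topology

/-- `(a,b,c)` is a positively oriented triple on the circle `ℝ/ℤ`: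
`b` lies in the open arc traversed counterclockwise from `a` to `c`. -/
def PosOriented (a b c : UnitAddCircle) : Prop :=
  ∃ x y z : ℝ, (x : UnitAddCircle) = a ∧ (y : UnitAddCircle) = b ∧
    (z : UnitAddCircle) = c ∧ x < y ∧ y < z ∧ z < x + 1

/-- Negatively oriented triple. -/
def NegOriented (a b c : UnitAddCircle) : Prop := PosOriented c b a

/-- The open arc traversed counterclockwise from `a` to `b`. -/
def Arc (a b : UnitAddCircle) : Set UnitAddCircle := {x | PosOriented a x b}

/-- A homeomorphism of the circle is orientation-preserving if it sends every
positively oriented triple to a positively oriented triple. -/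
def OrientationPreserving (h : UnitAddCircle ≃ₜ UnitAddCircle) : Prop :=
  ∀ a b c : UnitAddCircle, PosOriented a b c → PosOriented (h a) (h b) (h c)

/-- The fixed point set of a circle homeomorphism. -/
def FixSet (h : UnitAddCircle ≃ₜ UnitAddCircle) : Set UnitAddCircle := {x | h x = x}

/-- `x` is an attracting fixed point (a sink) of `h`. -/
def IsAttractingFix (h : UnitAddCircle ≃ₜ UnitAddCircle) (x : UnitAddCircle) : Prop :=
  h x = x ∧ ∃ U : Set UnitAddCircle, IsOpen U ∧ x ∈ U ∧
    ∀ y ∈ U, Tendsto (fun n => (⇑h)^[n] y) atTop (𝓝 x)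

/-- `x` is a repelling fixed point (a source) of `h`. -/
def IsRepellingFix (h : UnitAddCircle ≃ₜ UnitAddCircle) (x : UnitAddCircle) : Prop :=
  IsAttractingFix h.symm x

/-- A map of the circle is monotone on a set `A` if it sends no positively oriented
triple of points of `A` to a negatively oriented one, and vice versa. -/
def MonotoneCircOn (f : UnitAddCircle → UnitAddCircle) (A : Set UnitAddCircle) : Prop :=
  ∀ a ∈ A, ∀ b ∈ A, ∀ c ∈ A,
    (PosOriented a b c → ¬ NegOriented (f a) (f b) (f c)) ∧
    (NegOriented a b c → ¬ PosOriented (f a) (f b) (f c))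

/-- The group of self-homeomorphisms of the circle
(multiplication is composition: `f * g` applies `g` first). -/
noncomputable instance : Group (UnitAddCircle ≃ₜ UnitAddCircle) where
  mul f g := g.trans f
  one := Homeomorph.refl _
  inv := Homeomorph.symm
  mul_assoc f g h := Homeomorph.ext fun _ => rfl
  one_mul f := Homeomorph.ext fun _ => rfl
  mul_one f := Homeomorph.ext fun _ => rfl
  inv_mul_cancel f := Homeomorph.ext fun x => f.symm_apply_apply x

/-!
Suppose no element of `G = ⟨α, β⟩` sends `p` into the arc `I`. Then the set `K` of points whose
`G`-orbit misses `I` is closed, `G`-invariant and contains `p`. The gap of `K` (the complementary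
arc) containing `I` has its endpoints in `K`, unless `K` is a single point. Both `α` and `β` fix a
point of this gap and preserve `K`, so they map the gap onto itself; being orientation preserving,
they fix its endpoints. Thus `α` and `β` have a common fixed point, contradicting
`Disjoint (FixSet α) (FixSet β)`.
-/

open Set

section Gap

variable {α : Type*}

lemma le_and_le_of_disjoint_Ioo [LinearOrder α] {S : Set α} {a b x u v : α}
    (hS : Disjoint (Ioo a b) S) (hx : x ∈ Ioo a b) (hu : u ∈ S) (hv : v ∈ S)
    (hux : u < x) (hxv : x < v) : u ≤ a ∧ b ≤ v := by
  constructor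
  · by_contra! h
    exact hS.notMem_of_mem_left ⟨h, hux.trans hx.2⟩ hu
  · by_contra! h
    exact hS.notMem_of_mem_left ⟨hx.1.trans hxv, h⟩ hv

lemma IsClosed.exists_disjoint_Ioo [ConditionallyCompleteLinearOrder α] [TopologicalSpace α]
    [OrderTopology α] {S : Set α} (hS : IsClosed S) {x u₀ v₀ : α} (hx : x ∉ S)
    (hu₀ : u₀ ∈ S) (hv₀ : v₀ ∈ S) (hu₀x : u₀ ≤ x) (hxv₀ : x ≤ v₀) :
    ∃ u ∈ S, ∃ v ∈ S, u < x ∧ x < v ∧ Disjoint (Ioo u v) S := by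
  have hbdd : BddAbove (S ∩ Iic x) := ⟨x, fun _ h => h.2⟩
  have hbdd' : BddBelow (S ∩ Ici x) := ⟨x, fun _ h => h.2⟩
  have hu := (hS.inter isClosed_Iic).csSup_mem ⟨u₀, hu₀, hu₀x⟩ hbdd
  have hv := (hS.inter isClosed_Ici).csInf_mem ⟨v₀, hv₀, hxv₀⟩ hbdd'
  refine ⟨_, hu.1, _, hv.1, hu.2.lt_of_ne fun h => hx (h ▸ hu.1),
    hv.2.lt_of_ne' fun h => hx (h ▸ hv.1), disjoint_left.2 ?_⟩
  rintro t ⟨hut, htv⟩ ht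
  rcases le_total t x with htx | hxt
  · exact (le_csSup hbdd ⟨ht, htx⟩).not_gt hut
  · exact (csInf_le hbdd' ⟨ht, hxt⟩).not_gt htv

end Gap

namespace UnitAddCircle

lemma coe_eq_coe_iff {x y : ℝ} : (x : UnitAddCircle) = y ↔ ∃ k : ℤ, y = x + k := by
  rw [QuotientAddGroup.eq, AddSubgroup.mem_zmultiples_iff]
  simp only [zsmul_eq_mul, mul_one]
  constructor
  · rintro ⟨k, hk⟩; exact ⟨k, by linarith⟩
  · rintro ⟨k, rfl⟩; exact ⟨k, by ring⟩

@[simp]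
lemma coe_add_intCast (x : ℝ) (k : ℤ) : ((x + k : ℝ) : UnitAddCircle) = x :=
  (coe_eq_coe_iff.2 ⟨k, rfl⟩).symm

lemma posOriented_coe_iff {x : ℝ} {b c : UnitAddCircle} :
    PosOriented x b c ↔ ∃ y z : ℝ, (y : UnitAddCircle) = b ∧ (z : UnitAddCircle) = c ∧
      x < y ∧ y < z ∧ z < x + 1 := by
  constructor
  · rintro ⟨x', y, z, hx', hy, hz, hxy, hyz, hzx⟩
    obtain ⟨k, rfl⟩ := coe_eq_coe_iff.1 hx'
    exact ⟨y + k, z + k, by simpa using hy, by simpa using hz, by linarith, by linarith,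
      by linarith⟩
  · rintro ⟨y, z, hy, hz, hxy, hyz, hzx⟩
    exact ⟨x, y, z, rfl, hy, hz, hxy, hyz, hzx⟩

lemma posOriented_iff_sbtw {a b c : UnitAddCircle} : PosOriented a b c ↔ sbtw a b c := by
  induction a using QuotientAddGroup.induction_on with | H x => ?_
  induction b using QuotientAddGroup.induction_on with | H y => ?_
  induction c using QuotientAddGroup.induction_on with | H z => ?_
  rw [sbtw_iff_not_btw, btw_cyclic, QuotientAddGroup.btw_coe_iff, not_le, posOriented_coe_iff]
  -- `toIocMod x y` and `toIcoMod x z` are the lifts of `y` and `z` in `(x, x + 1]`, `[x, x + 1)`.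
  constructor
  · rintro ⟨y', z', hy, hz, hxy, hyz, hzx⟩
    obtain ⟨k, rfl⟩ := coe_eq_coe_iff.1 hy
    obtain ⟨l, rfl⟩ := coe_eq_coe_iff.1 hz
    rwa [(toIocMod_eq_iff _).2 ⟨⟨hxy, by linarith⟩, k, by simp⟩,
      (toIcoMod_eq_iff _).2 ⟨⟨by linarith, hzx⟩, l, by simp⟩]
  · intro h
    refine ⟨_, _, ?_, ?_, left_lt_toIocMod _ _ _, h, toIcoMod_lt_right _ _ _⟩
    · exact coe_eq_coe_iff.2 ⟨toIocDiv _ x y, by linarith [toIocMod_add_toIocDiv_mul one_pos x y]⟩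
    · exact coe_eq_coe_iff.2 ⟨toIcoDiv _ x z, by linarith [toIcoMod_add_toIcoDiv_mul one_pos x z]⟩

lemma exists_coe_mem_Ico (x : ℝ) (w : UnitAddCircle) :
    ∃ t ∈ Ico x (x + 1), (t : UnitAddCircle) = w := by
  rw [← mem_image, AddCircle.coe_image_Ico_eq]
  trivial

lemma arc_coe_eq_image {x z : ℝ} (hxz : x < z) (hzx : z < x + 1) :
    Arc x z = ((↑) : ℝ → UnitAddCircle) '' Ioo x z := by
  ext w
  simp only [Arc, mem_ofPred_eq, posOriented_coe_iff, mem_image, mem_Ioo]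
  constructor
  · rintro ⟨y, z', rfl, hz', hxy, hyz', hz'x⟩
    obtain rfl : z' = z :=
      (AddCircle.coe_eq_coe_iff_of_mem_Ico ⟨by linarith, hz'x⟩ ⟨hxz.le, hzx⟩).1 hz'
    exact ⟨y, ⟨hxy, hyz'⟩, rfl⟩
  · rintro ⟨y, ⟨hxy, hyz⟩, rfl⟩
    exact ⟨y, z, rfl, rfl, hxy, hyz, hzx⟩

lemma isOpen_arc (a b : UnitAddCircle) : IsOpen (Arc a b) := by
  obtain ⟨x, rfl⟩ := QuotientAddGroup.mk_surjective a
  obtain ⟨z, ⟨hxz, hzx⟩, rfl⟩ := exists_coe_mem_Ico x b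
  rcases hxz.eq_or_lt with rfl | hxz
  · convert isOpen_empty
    ext w
    simp [Arc, posOriented_iff_sbtw, sbtw_irrefl_left_right]
  · rw [arc_coe_eq_image hxz hzx]
    exact QuotientAddGroup.isOpenMap_coe _ isOpen_Ioo

lemma exists_coe_eq_of_coe_mem_arc {a b : UnitAddCircle} {x : ℝ}
    (hx : (x : UnitAddCircle) ∈ Arc a b) :
    ∃ u v : ℝ, (u : UnitAddCircle) = a ∧ (v : UnitAddCircle) = b ∧ u < x ∧ x < v ∧ v < u + 1 := by
  rw [Arc, mem_ofPred_eq, posOriented_iff_sbtw, ← sbtw_cyclic, ← posOriented_iff_sbtw,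
    posOriented_coe_iff] at hx
  obtain ⟨v, u, hv, hu, hxv, hvu, hux⟩ := hx
  exact ⟨u - 1, v, by simpa [sub_eq_add_neg] using hu, hv, by linarith, hxv, by linarith⟩

lemma exists_disjoint_Ioo_of_isClosed {K : Set UnitAddCircle} (hK : IsClosed K)
    (hne : K.Nonempty) {x : ℝ} (hx : (x : UnitAddCircle) ∉ K) :
    ∃ u v : ℝ, (u : UnitAddCircle) ∈ K ∧ (v : UnitAddCircle) ∈ K ∧ u < x ∧ x < v ∧
      v ≤ u + 1 ∧ Disjoint (Ioo u v) ((↑) ⁻¹' K) := by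
  obtain ⟨w, ht⟩ := hne
  obtain ⟨t, rfl⟩ := QuotientAddGroup.mk_surjective w
  obtain ⟨u, hu, v, hv, hux, hxv, hgap⟩ :=
    (hK.preimage (AddCircle.continuous_mk' 1)).exists_disjoint_Ioo hx
      (u₀ := t + ⌊x - t⌋) (v₀ := t + ⌈x - t⌉) (by simpa using ht) (by simpa using ht)
      (by linarith [Int.floor_le (x - t)]) (by linarith [Int.le_ceil (x - t)])
  refine ⟨u, v, hu, hv, hux, hxv, not_lt.1 fun h => ?_, hgap⟩
  exact hgap.notMem_of_mem_left ⟨lt_add_one u, h⟩ (by simpa using hu)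

lemma eq_of_disjoint_Ioo_add_one {K : Set UnitAddCircle} {u : ℝ}
    (hgap : Disjoint (Ioo u (u + 1)) ((↑) ⁻¹' K)) {w : UnitAddCircle} (hw : w ∈ K) : w = u := by
  obtain ⟨t, ⟨hut, htu⟩, rfl⟩ := exists_coe_mem_Ico u w
  rcases hut.eq_or_lt with rfl | hut
  · rfl
  · exact absurd hw (hgap.notMem_of_mem_left ⟨hut, htu⟩)

end UnitAddCircle

namespace OrientationPreserving

open UnitAddCircle

variable {h : UnitAddCircle ≃ₜ UnitAddCircle} {K : Set UnitAddCircle}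

lemma symm (hh : OrientationPreserving h) : OrientationPreserving h.symm := by
  simp only [OrientationPreserving, posOriented_iff_sbtw] at hh ⊢
  intro a b c habc
  rw [sbtw_iff_not_btw]
  intro hcba
  by_cases h' : sbtw (h.symm c) (h.symm b) (h.symm a)
  · exact sbtw_asymm habc (by simpa using hh _ _ _ h')
  · rw [← btw_iff_not_sbtw] at h'
    rcases h'.antisymm hcba with e | e | e <;> obtain rfl := h.symm.injective e
    · exact sbtw_irrefl_left habc
    · exact sbtw_irrefl_right habc
    · exact sbtw_irrefl_left_right habc

lemma disjoint_arc_apply (hh : OrientationPreserving h) (hK : MapsTo h.symm K K)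
    {a b : UnitAddCircle} (hab : Disjoint (Arc a b) K) : Disjoint (Arc (h a) (h b)) K := by
  refine disjoint_left.2 fun w hw hwK => hab.notMem_of_mem_left ?_ (hK hwK)
  have hw' := hh.symm _ _ _ hw
  simp only [Homeomorph.symm_apply_apply] at hw'
  exact hw'

lemma apply_eq_of_disjoint_Ioo (hh : OrientationPreserving h) (hK : MapsTo h K K)
    (hK' : MapsTo h.symm K K) {u x v : ℝ} (hu : (u : UnitAddCircle) ∈ K)
    (hv : (v : UnitAddCircle) ∈ K) (hux : u < x) (hxv : x < v) (hvu : v ≤ u + 1)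
    (hgap : Disjoint (Ioo u v) ((↑) ⁻¹' K)) (hfix : h x = x) : h u = u := by
  rcases hvu.eq_or_lt with rfl | hvu
  · exact eq_of_disjoint_Ioo_add_one hgap (hK hu)
  have hx : (x : UnitAddCircle) ∈ Arc (h u) (h v) :=
    hfix ▸ hh _ _ _ ⟨u, x, v, rfl, rfl, rfl, hux, hxv, hvu⟩
  obtain ⟨u₁, v₁, hu₁, hv₁, hu₁x, hxv₁, hv₁u₁⟩ := exists_coe_eq_of_coe_mem_arc hx
  have hgap₁ : Disjoint (Ioo u₁ v₁) ((↑) ⁻¹' K) := by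
    rw [← disjoint_image_left, ← arc_coe_eq_image (hu₁x.trans hxv₁) hv₁u₁, hu₁, hv₁]
    rw [← disjoint_image_left, ← arc_coe_eq_image (hux.trans hxv) hvu] at hgap
    exact hh.disjoint_arc_apply hK' hgap
  -- `(u, v)` and `(u₁, v₁)` are both gaps of `K` around `x`, so they coincide.
  have hu₁K : (u₁ : UnitAddCircle) ∈ K := hu₁ ▸ hK hu
  have hv₁K : (v₁ : UnitAddCircle) ∈ K := hv₁ ▸ hK hv
  have hu₁u : u₁ ≤ u := (le_and_le_of_disjoint_Ioo hgap ⟨hux, hxv⟩ hu₁K hv₁K hu₁x hxv₁).1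
  have huu₁ : u ≤ u₁ := (le_and_le_of_disjoint_Ioo hgap₁ ⟨hu₁x, hxv₁⟩ hu hv hux hxv).1
  rw [← hu₁, le_antisymm hu₁u huu₁]

end OrientationPreserving

def orbitAvoiding (G : Subgroup (UnitAddCircle ≃ₜ UnitAddCircle)) (U : Set UnitAddCircle) :
    Set UnitAddCircle :=
  {q | ∀ g ∈ G, g q ∉ U}

section orbitAvoiding

variable {G : Subgroup (UnitAddCircle ≃ₜ UnitAddCircle)} {U : Set UnitAddCircle}

lemma isClosed_orbitAvoiding (hU : IsOpen U) : IsClosed (orbitAvoiding G U) := by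
  have : orbitAvoiding G U = ⋂ g ∈ G, g ⁻¹' Uᶜ := by
    ext q
    simp [orbitAvoiding]
  rw [this]
  exact isClosed_biInter fun g _ => hU.isClosed_compl.preimage g.continuous

lemma disjoint_orbitAvoiding : Disjoint U (orbitAvoiding G U) :=
  disjoint_right.2 fun _ hq => hq 1 G.one_mem

lemma mapsTo_orbitAvoiding {g : UnitAddCircle ≃ₜ UnitAddCircle} (hg : g ∈ G) :
    MapsTo g (orbitAvoiding G U) (orbitAvoiding G U) :=
  fun _ hq g' hg' => hq (g' * g) (G.mul_mem hg' hg)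

lemma mapsTo_symm_orbitAvoiding {g : UnitAddCircle ≃ₜ UnitAddCircle} (hg : g ∈ G) :
    MapsTo g.symm (orbitAvoiding G U) (orbitAvoiding G U) :=
  mapsTo_orbitAvoiding (G.inv_mem hg)

end orbitAvoiding

open UnitAddCircle in
theorem ping_pong_into_interval_general
    (α β : UnitAddCircle ≃ₜ UnitAddCircle)
    (hαOP : OrientationPreserving α) (hβOP : OrientationPreserving β)
    (hdisj : Disjoint (FixSet α) (FixSet β))
    (p : UnitAddCircle) (a b : UnitAddCircle) (I : Set UnitAddCircle)
    (hI : I = Arc a b)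
    (hIα : ∃ x ∈ FixSet α, x ∈ I) (hIβ : ∃ x ∈ FixSet β, x ∈ I) :
    ∃ g ∈ Subgroup.closure ({α, β} : Set (UnitAddCircle ≃ₜ UnitAddCircle)), g p ∈ I := by
  subst hI
  by_contra! hp
  set G := Subgroup.closure ({α, β} : Set (UnitAddCircle ≃ₜ UnitAddCircle))
  set K := orbitAvoiding G (Arc a b)
  have hαG : α ∈ G := Subgroup.subset_closure (mem_insert α _)
  have hβG : β ∈ G := Subgroup.subset_closure (mem_insert_of_mem α rfl)
  obtain ⟨-, hαx, a, x, b, rfl, rfl, rfl, hax, hxb, hba⟩ := hIα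
  obtain ⟨y₀, hβy, hy⟩ := hIβ
  rw [arc_coe_eq_image (hax.trans hxb) hba] at hy
  obtain ⟨y, ⟨hay, hyb⟩, rfl⟩ := hy
  have hIK : Disjoint (Ioo a b) ((↑) ⁻¹' K) := by
    rw [← disjoint_image_left, ← arc_coe_eq_image (hax.trans hxb) hba]
    exact disjoint_orbitAvoiding
  obtain ⟨u, v, hu, hv, hux, hxv, hvu, hgap⟩ :=
    exists_disjoint_Ioo_of_isClosed (isClosed_orbitAvoiding (isOpen_arc _ _)) ⟨p, hp⟩
      (hIK.notMem_of_mem_left ⟨hax, hxb⟩)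
  have hαu : α u = u := hαOP.apply_eq_of_disjoint_Ioo (mapsTo_orbitAvoiding hαG)
    (mapsTo_symm_orbitAvoiding hαG) hu hv hux hxv hvu hgap hαx
  obtain ⟨hua, hbv⟩ := le_and_le_of_disjoint_Ioo hIK ⟨hax, hxb⟩ hu hv hux hxv
  have hβu : β u = u := hβOP.apply_eq_of_disjoint_Ioo (mapsTo_orbitAvoiding hβG)
    (mapsTo_symm_orbitAvoiding hβG) hu hv (by linarith) (by linarith) hvu hgap hβy
  exact hdisj.notMem_of_mem_left hαu hβu

theorem ping_pong_into_interval
    (α β : UnitAddCircle ≃ₜ UnitAddCircle)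
    (hαOP : OrientationPreserving α) (hβOP : OrientationPreserving β)
    (hαfin : (FixSet α).Finite) (hβfin : (FixSet β).Finite)
    (hαne : (FixSet α).Nonempty) (hβne : (FixSet β).Nonempty)
    (hdisj : Disjoint (FixSet α) (FixSet β))
    (hαss : ∀ x ∈ FixSet α, IsAttractingFix α x ∨ IsRepellingFix α x)
    (hβss : ∀ x ∈ FixSet β, IsAttractingFix β x ∨ IsRepellingFix β x)
    (p : UnitAddCircle) (a b : UnitAddCircle) (I : Set UnitAddCircle)
    (hI : I = Arc a b) (hIne : I.Nonempty)
    (hIα : ∃ x ∈ FixSet α, x ∈ I) (hIβ : ∃ x ∈ FixSet β, x ∈ I) :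
    ∃ g ∈ Subgroup.closure ({α, β} : Set (UnitAddCircle ≃ₜ UnitAddCircle)), g p ∈ I :=
  ping_pong_into_interval_general α β hαOP hβOP hdisj p a b I hI hIα hIβ
end

section
/- Let A ⊆ S¹ be a subset and let B ⊆ S¹ be a dense subset of the circle. Let f: A → B be a surjection that is monotone with respect to the canonical circular orders on S¹. Then there exists a unique continuous monotone map F: S¹ → S¹ such that F(a) = f(a) for all a ∈ A. -/
open Filter Topology

namespace MonExtAux

open Set

lemma coe_eq_coe {x y : ℝ} : (x : UnitAddCircle) = (y : UnitAddCircle) ↔ ∃ k : ℤ, y = x + k := by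
  rw [QuotientAddGroup.eq_iff_sub_mem, AddSubgroup.mem_zmultiples_iff]
  constructor
  · rintro ⟨k, hk⟩
    rw [zsmul_one] at hk
    exact ⟨-k, by push_cast; linarith⟩
  · rintro ⟨k, rfl⟩
    refine ⟨-k, ?_⟩
    rw [zsmul_one]; push_cast; ring

lemma coe_add_int (t : ℝ) (k : ℤ) : ((t + k : ℝ) : UnitAddCircle) = (t : UnitAddCircle) :=
  (coe_eq_coe.mpr ⟨k, rfl⟩).symm

lemma ne_of_rep {x y : ℝ} (h1 : x < y) (h2 : y < x + 1) :
    (x : UnitAddCircle) ≠ (y : UnitAddCircle) := by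
  intro h
  obtain ⟨k, hk⟩ := coe_eq_coe.mp h
  have h3 : (0:ℝ) < k := by linarith
  have h4 : (k:ℝ) < 1 := by linarith
  have : (0:ℤ) < k := by exact_mod_cast h3
  have : (k:ℤ) < 1 := by exact_mod_cast h4
  omega

lemma not_pos_of_le {u v w : ℝ} (h1 : u ≤ v) (h2 : v ≤ w) (h3 : w ≤ u + 1) :
    ¬ PosOriented (w : UnitAddCircle) (v : UnitAddCircle) (u : UnitAddCircle) := by
  rintro ⟨r, s, t, hr, hs, ht, hrs, hst, htr⟩
  obtain ⟨k1, hk1⟩ := coe_eq_coe.mp hr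
  obtain ⟨k2, hk2⟩ := coe_eq_coe.mp hs
  obtain ⟨k3, hk3⟩ := coe_eq_coe.mp ht
  have e1 : (k2:ℝ) < k1 := by linarith
  have e2 : (k3:ℝ) < k2 := by linarith
  have e3 : (k1:ℝ) < k3 + 2 := by linarith
  have i1 : k2 < k1 := by exact_mod_cast e1
  have i2 : k3 < k2 := by exact_mod_cast e2
  have i3 : k1 < k3 + 2 := by exact_mod_cast e3
  omega

lemma rep_exists (w : UnitAddCircle) (x : ℝ) :
    ∃ y : ℝ, (y : UnitAddCircle) = w ∧ y ∈ Ico x (x + 1) := by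
  refine ⟨(AddCircle.equivIco 1 x w : ℝ), ?_, (AddCircle.equivIco 1 x w).2⟩
  have := (AddCircle.equivIco 1 x).symm_apply_apply w
  rwa [AddCircle.equivIco, QuotientAddGroup.equivIcoMod_symm_apply] at this

lemma rep_exists_ne (w : UnitAddCircle) (x : ℝ) (hw : w ≠ (x : UnitAddCircle)) :
    ∃ y : ℝ, (y : UnitAddCircle) = w ∧ y ∈ Ioo x (x + 1) := by
  obtain ⟨y, hy, h1, h2⟩ := rep_exists w x
  refine ⟨y, hy, lt_of_le_of_ne h1 ?_, h2⟩
  rintro rfl; exact hw hy.symm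

lemma pos_or_neg {a b c : UnitAddCircle} (hab : a ≠ b) (hbc : b ≠ c) (hac : a ≠ c) :
    PosOriented a b c ∨ PosOriented c b a := by
  obtain ⟨x, hx, -⟩ := rep_exists a 0
  obtain ⟨y, hy, hy1, hy2⟩ := rep_exists_ne b x (by rw [hx]; exact hab.symm)
  obtain ⟨z, hz, hz1, hz2⟩ := rep_exists_ne c x (by rw [hx]; exact hac.symm)
  rcases lt_trichotomy y z with h | h | h
  · exact Or.inl ⟨x, y, z, hx, hy, hz, hy1, h, hz2⟩
  · exact absurd (hy.symm.trans (h ▸ hz)) hbc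
  · refine Or.inr ⟨z, y, x + 1, hz, hy, ?_, h, hy2, by linarith⟩
    rw [show x + (1:ℝ) = x + ((1:ℤ):ℝ) by norm_num, coe_add_int, hx]

lemma uniq_aux (A B : Set UnitAddCircle) (hB : Dense B)
    (f : UnitAddCircle → UnitAddCircle) (hsurj : f '' A = B)
    (F1 F2 : UnitAddCircle → UnitAddCircle)
    (hm1 : MonotoneCircOn F1 Set.univ) (hm2 : MonotoneCircOn F2 Set.univ)
    (he1 : ∀ a ∈ A, F1 a = f a) (he2 : ∀ a ∈ A, F2 a = f a) : F1 = F2 := by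
  funext z
  by_contra hpq
  obtain ⟨x, hx, -⟩ := rep_exists (F1 z) 0
  obtain ⟨zr, hzr, hzr1, hzr2⟩ := rep_exists_ne (F2 z) x (by rw [hx]; exact fun h => hpq h.symm)
  -- pick b in the image of (x, zr) and b' in the image of (zr, x+1)
  have hopen1 : IsOpen ((fun t : ℝ => (t : UnitAddCircle)) '' Ioo x zr) :=
    QuotientAddGroup.isOpenMap_coe _ isOpen_Ioo
  have hopen2 : IsOpen ((fun t : ℝ => (t : UnitAddCircle)) '' Ioo zr (x + 1)) :=
    QuotientAddGroup.isOpenMap_coe _ isOpen_Ioo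
  obtain ⟨b, hbB, hbO⟩ := hB.exists_mem_open hopen1 ((nonempty_Ioo.mpr hzr1).image _)
  obtain ⟨b', hb'B, hb'O⟩ := hB.exists_mem_open hopen2 ((nonempty_Ioo.mpr hzr2).image _)
  obtain ⟨y, hyI, hyb⟩ := hbO
  obtain ⟨y', hy'I, hy'b⟩ := hb'O
  rw [← hsurj] at hbB hb'B
  obtain ⟨a, haA, hab⟩ := hbB
  obtain ⟨a', ha'A, ha'b⟩ := hb'B
  -- distinctness
  have hba : b ≠ F1 z := by
    rw [← hx, ← hyb]; exact (ne_of_rep hyI.1 (hyI.2.trans hzr2)).symm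
  have hbq : b ≠ F2 z := by
    rw [← hzr, ← hyb]; exact ne_of_rep hyI.2 (by linarith [hyI.1])
  have hb'q : b' ≠ F2 z := by
    rw [← hzr, ← hy'b]; exact (ne_of_rep hy'I.1 (by linarith [hy'I.2])).symm
  have hb'p : b' ≠ F1 z := by
    rw [← hx, ← hy'b]; exact (ne_of_rep (hzr1.trans hy'I.1) hy'I.2).symm
  have hbb' : b ≠ b' := by
    rw [← hyb, ← hy'b]; exact ne_of_rep (hyI.2.trans hy'I.1) (by linarith [hyI.1, hy'I.2])
  have hza : a ≠ z := fun h => hba (by rw [← hab, ← he1 a haA, h])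
  have hza' : z ≠ a' := fun h => hb'q (by rw [← ha'b, ← he2 a' ha'A, ← h])
  have haa' : a ≠ a' := fun h => hbb' (by rw [← hab, ← ha'b, h])
  have hF1a : F1 a = b := by rw [he1 a haA, hab]
  have hF1a' : F1 a' = b' := by rw [he1 a' ha'A, ha'b]
  have hF2a : F2 a = b := by rw [he2 a haA, hab]
  have hF2a' : F2 a' = b' := by rw [he2 a' ha'A, ha'b]
  rcases pos_or_neg hza hza' haa' with h | h
  · -- Pos a z a' : F1 must not send it to a negative triple
    refine (hm1 a (Set.mem_univ _) z (Set.mem_univ _) a' (Set.mem_univ _)).1 h ?_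
    show PosOriented (F1 a') (F1 z) (F1 a)
    rw [hF1a, hF1a', ← hx, ← hyb, ← hy'b]
    exact ⟨y', x + 1, y + 1, rfl,
      (by rw [show x + (1:ℝ) = x + ((1:ℤ):ℝ) by norm_num, coe_add_int]),
      (by rw [show y + (1:ℝ) = y + ((1:ℤ):ℝ) by norm_num, coe_add_int]),
      hy'I.2, by linarith [hyI.1], by linarith [hyI.2, hy'I.1]⟩
  · -- Neg a z a' : F2 must not send it to a positive triple
    refine (hm2 a (Set.mem_univ _) z (Set.mem_univ _) a' (Set.mem_univ _)).2 h ?_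
    show PosOriented (F2 a) (F2 z) (F2 a')
    rw [hF2a, hF2a', ← hzr, ← hyb, ← hy'b]
    exact ⟨y, zr, y', rfl, rfl, rfl, hyI.2, hy'I.1, by linarith [hyI.1, hy'I.2]⟩

lemma exists_ext (A B : Set UnitAddCircle) (hB : Dense B)
    (f : UnitAddCircle → UnitAddCircle) (hsurj : f '' A = B)
    (hmono : MonotoneCircOn f A) :
    ∃ F : UnitAddCircle → UnitAddCircle,
      Continuous F ∧ MonotoneCircOn F Set.univ ∧ ∀ a ∈ A, F a = f a := by
  classical
  have hAne : A.Nonempty := by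
    obtain ⟨b, hb⟩ := hB.nonempty
    rw [← hsurj] at hb; obtain ⟨a, ha, -⟩ := hb; exact ⟨a, ha⟩
  obtain ⟨a₀, ha₀⟩ := hAne
  obtain ⟨x₀, hx₀, -⟩ := rep_exists a₀ 0
  obtain ⟨y₀, hy₀, -⟩ := rep_exists (f a₀) 0
  -- canonical representative in [y₀, y₀+1)
  set r : UnitAddCircle → ℝ := fun w => ((AddCircle.equivIco 1 y₀ w : Ico y₀ (y₀ + 1)) : ℝ)
    with hrdef
  have hr_mem : ∀ w, r w ∈ Ico y₀ (y₀ + 1) := fun w => (AddCircle.equivIco 1 y₀ w).2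
  have hr_coe : ∀ w, ((r w : ℝ) : UnitAddCircle) = w := by
    intro w
    have := (AddCircle.equivIco 1 y₀).symm_apply_apply w
    rwa [AddCircle.equivIco, QuotientAddGroup.equivIcoMod_symm_apply] at this
  have hr_uniq : ∀ (w : UnitAddCircle) (t : ℝ), t ∈ Ico y₀ (y₀ + 1) →
      ((t : ℝ) : UnitAddCircle) = w → r w = t := by
    intro w t ht hcoe
    exact (AddCircle.coe_eq_coe_iff_of_mem_Ico (hr_mem w) ht).mp ((hr_coe w).trans hcoe.symm)
  have hr_c : r (f a₀) = y₀ := hr_uniq _ _ ⟨le_refl _, lt_add_one _⟩ hy₀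
  have hr_ne : ∀ w, w ≠ f a₀ → y₀ < r w := by
    intro w h
    rcases lt_or_eq_of_le (hr_mem w).1 with h' | h'
    · exact h'
    · exact absurd (by rw [← hr_coe w, ← h', hy₀] : w = f a₀) h
  -- the sets of levels and the lift
  set S : ℝ → Set ℝ := fun s =>
    insert 0 ((fun u : ℝ => r (f (u : UnitAddCircle)) - y₀) '' {u : ℝ | (u : UnitAddCircle) ∈ A ∧ u ∈ Ioc x₀ s})
    with hSdef
  have hS0 : ∀ s, (0:ℝ) ∈ S s := fun s => Set.mem_insert _ _
  have hS_sub : ∀ s, S s ⊆ Icc 0 1 := by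
    rintro s t (rfl | ⟨u, -, rfl⟩)
    · exact ⟨le_refl _, zero_le_one⟩
    · show r (f (u : UnitAddCircle)) - y₀ ∈ Icc 0 1
      exact ⟨by linarith [(hr_mem (f (u : UnitAddCircle))).1],
        by linarith [(hr_mem (f (u : UnitAddCircle))).2]⟩
  have hS_bdd : ∀ s, BddAbove (S s) := fun s => ⟨1, fun t ht => (hS_sub s ht).2⟩
  have hS_mono : ∀ {s s' : ℝ}, s ≤ s' → S s ⊆ S s' := by
    intro s s' h t ht
    rcases ht with rfl | ⟨u, hu, rfl⟩
    · exact hS0 _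
    · exact Set.mem_insert_of_mem _ ⟨u, ⟨hu.1, hu.2.1, hu.2.2.trans h⟩, rfl⟩
  set σ : ℝ → ℝ := fun s => sSup (S s) with hσdef
  have hσ0 : ∀ s, 0 ≤ σ s := fun s => le_csSup (hS_bdd s) (hS0 s)
  have hσ1 : ∀ s, σ s ≤ 1 := fun s => csSup_le ⟨0, hS0 s⟩ (fun t ht => (hS_sub s ht).2)
  have hσ_mono : ∀ {s s' : ℝ}, s ≤ s' → σ s ≤ σ s' := fun h =>
    csSup_le_csSup (hS_bdd _) ⟨0, hS0 _⟩ (hS_mono h)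
  set g : ℝ → ℝ := fun t => y₀ + (⌊t - x₀⌋ : ℝ) + σ (t - ⌊t - x₀⌋) with hgdef
  have hg_int : ∀ (t : ℝ) (k : ℤ), g (t + k) = g t + k := by
    intro t k
    have h1 : ⌊t + (k:ℝ) - x₀⌋ = ⌊t - x₀⌋ + k := by
      rw [show t + (k:ℝ) - x₀ = (t - x₀) + k by ring, Int.floor_add_intCast]
    show y₀ + (⌊t + (k:ℝ) - x₀⌋ : ℝ) + σ (t + (k:ℝ) - ⌊t + (k:ℝ) - x₀⌋)
        = y₀ + (⌊t - x₀⌋ : ℝ) + σ (t - ⌊t - x₀⌋) + k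
    rw [h1]
    have h2 : t + (k:ℝ) - ((⌊t - x₀⌋ + k : ℤ) : ℝ) = t - ⌊t - x₀⌋ := by push_cast; ring
    rw [h2]; push_cast; ring
  have hg_mono : Monotone g := by
    intro t t' h
    have hf : ⌊t - x₀⌋ ≤ ⌊t' - x₀⌋ := Int.floor_le_floor (by linarith)
    rcases eq_or_lt_of_le hf with he | hlt
    · have h1 : σ (t - (⌊t - x₀⌋ : ℝ)) ≤ σ (t' - (⌊t - x₀⌋ : ℝ)) := hσ_mono (by linarith)
      show y₀ + (⌊t - x₀⌋ : ℝ) + _ ≤ y₀ + (⌊t' - x₀⌋ : ℝ) + _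
      rw [← he]; linarith
    · have h2 : (⌊t - x₀⌋ : ℝ) + 1 ≤ (⌊t' - x₀⌋ : ℝ) := by exact_mod_cast hlt
      have h3 := hσ1 (t - ⌊t - x₀⌋)
      have h4 := hσ0 (t' - ⌊t' - x₀⌋)
      show y₀ + (⌊t - x₀⌋ : ℝ) + _ ≤ y₀ + (⌊t' - x₀⌋ : ℝ) + _
      linarith
  have hfloor : ∀ t : ℝ, t - (⌊t - x₀⌋ : ℝ) ∈ Ico x₀ (x₀ + 1) := by
    intro t
    constructor
    · linarith [Int.floor_le (t - x₀)]
    · linarith [Int.lt_floor_add_one (t - x₀)]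
  -- the key computation on a fundamental domain
  have key : ∀ s : ℝ, s ∈ Ico x₀ (x₀ + 1) → (s : UnitAddCircle) ∈ A →
      ((g s : ℝ) : UnitAddCircle) = f (s : UnitAddCircle) := by
    intro s hs hA
    have hfl : ⌊s - x₀⌋ = 0 := by
      rw [Int.floor_eq_zero_iff]
      exact ⟨by linarith [hs.1], by linarith [hs.2]⟩
    have hgs : g s = y₀ + σ s := by
      show y₀ + (⌊s - x₀⌋ : ℝ) + σ (s - ⌊s - x₀⌋) = y₀ + σ s
      rw [hfl]; norm_num
    by_cases hc : f s = f a₀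
    · by_cases hall : ∀ u : ℝ, (u : UnitAddCircle) ∈ A → u ∈ Ioc x₀ s → f u = f a₀
      · have hSs : S s = {0} := by
          apply Set.Subset.antisymm
          · rintro t (rfl | ⟨u, hu, rfl⟩)
            · rfl
            · show r (f (u : UnitAddCircle)) - y₀ ∈ ({0} : Set ℝ)
              rw [hall u hu.1 hu.2, hr_c]; simp
          · rintro t rfl
            exact hS0 s
        have hσs : σ s = 0 := by show sSup (S s) = 0; rw [hSs]; exact csSup_singleton 0
        rw [hgs, hσs, add_zero, hy₀, ← hc]
      · push_neg at hall
        obtain ⟨u, huA, huI, hne⟩ := hall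
        have hus : u < s := lt_of_le_of_ne huI.2 (fun h => hne (by rw [h, hc]))
        have hγ : y₀ < r (f (u : UnitAddCircle)) := hr_ne _ hne
        have hclaim : ∀ v : ℝ, r (f (u : UnitAddCircle)) - y₀ < v → v < 1 → v ≤ σ s := by
          intro v hv1 hv2
          have hv0 : 0 < v := by linarith
          have hopen : IsOpen ((fun t : ℝ => (t : UnitAddCircle)) '' Ioo (y₀ + v) (y₀ + 1)) :=
            QuotientAddGroup.isOpenMap_coe _ isOpen_Ioo
          obtain ⟨b, hbB, hbO⟩ := hB.exists_mem_open hopen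
            ((nonempty_Ioo.mpr (by linarith)).image _)
          obtain ⟨w, hwI, hwb⟩ := hbO
          replace hwb : ((w : ℝ) : UnitAddCircle) = b := hwb
          have hrb : r b = w := hr_uniq _ _ ⟨by linarith [hwI.1], hwI.2⟩ hwb
          rw [← hsurj] at hbB
          obtain ⟨a', ha'A, ha'b⟩ := hbB
          have hbc : b ≠ f a₀ := by
            intro h; rw [h, hr_c] at hrb; linarith [hwI.1]
          have hbe : b ≠ f u := by
            intro h; rw [h] at hrb; linarith [hwI.1]
          obtain ⟨u', hu'c, hu'I⟩ := rep_exists a' x₀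
          have hu'x : x₀ < u' := by
            rcases eq_or_lt_of_le hu'I.1 with h | h
            · exact absurd (by rw [← ha'b, ← hu'c, ← h, hx₀] : b = f a₀) hbc
            · exact h
          rcases lt_trichotomy u' u with h1 | h1 | h1
          · exfalso
            refine (hmono a₀ ha₀ a' ha'A u huA).1
              ⟨x₀, u', u, hx₀, hu'c, rfl, hu'x, h1, by linarith [hs.2, huI.2]⟩ ?_
            show PosOriented (f (u : UnitAddCircle)) (f a') (f a₀)
            refine ⟨r (f (u : UnitAddCircle)), w, y₀ + 1, hr_coe _, ?_, ?_, by linarith [hwI.1], hwI.2,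
              by linarith⟩
            · rw [hwb, ha'b]
            · rw [show y₀ + (1:ℝ) = y₀ + ((1:ℤ):ℝ) by norm_num, coe_add_int, hy₀]
          · exact absurd (by rw [← ha'b, ← hu'c, h1] : b = f (u : UnitAddCircle)) hbe
          · rcases lt_trichotomy u' s with h2 | h2 | h2
            · -- the good case: u' gives an element of S s of level > v
              have hmemS : r (f (u' : UnitAddCircle)) - y₀ ∈ S s := Set.mem_insert_of_mem _
                ⟨u', ⟨by rw [hu'c]; exact ha'A, hu'x, le_of_lt h2⟩, rfl⟩
              have : v ≤ r (f (u' : UnitAddCircle)) - y₀ := by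
                rw [hu'c, ha'b, hrb]; linarith [hwI.1]
              exact this.trans (le_csSup (hS_bdd s) hmemS)
            · exact absurd (by rw [← ha'b, ← hu'c, h2, hc] : b = f a₀) hbc
            · exfalso
              refine (hmono u huA s hA a' ha'A).1
                ⟨u, s, u', rfl, rfl, hu'c, hus, h2, by linarith [hu'I.2, huI.1]⟩ ?_
              show PosOriented (f a') (f (s : UnitAddCircle)) (f (u : UnitAddCircle))
              refine ⟨w, y₀ + 1, r (f (u : UnitAddCircle)) + 1, ?_, ?_, ?_, hwI.2, by linarith,
                by linarith [hwI.1]⟩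
              · rw [hwb, ha'b]
              · rw [show y₀ + (1:ℝ) = y₀ + ((1:ℤ):ℝ) by norm_num, coe_add_int, hy₀, ← hc]
              · rw [show r (f (u : UnitAddCircle)) + (1:ℝ) = r (f (u : UnitAddCircle)) + ((1:ℤ):ℝ) by norm_num, coe_add_int,
                  hr_coe]
        have hσs : σ s = 1 := by
          refine le_antisymm (hσ1 s) ?_
          by_contra hlt
          push_neg at hlt
          set v := max (r (f (u : UnitAddCircle)) - y₀) (σ s) with hvdef
          have hv1 : v < 1 := max_lt (by linarith [(hr_mem (f (u : UnitAddCircle))).2]) hlt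
          have hv2 : r (f (u : UnitAddCircle)) - y₀ < (v + 1) / 2 := by
            have : r (f (u : UnitAddCircle)) - y₀ ≤ v := le_max_left _ _
            linarith
          have := hclaim ((v + 1) / 2) hv2 (by linarith)
          have hσv : σ s ≤ v := le_max_right _ _
          linarith
        rw [hgs, hσs, show y₀ + (1:ℝ) = y₀ + ((1:ℤ):ℝ) by norm_num, coe_add_int, hy₀, ← hc]
    · -- f s ≠ f a₀
      have hβ : y₀ < r (f (s : UnitAddCircle)) := hr_ne _ hc
      have hsx : x₀ < s := by
        rcases eq_or_lt_of_le hs.1 with h | h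
        · exact absurd (by rw [← h, hx₀] : (s : UnitAddCircle) = a₀) (fun e => hc (by rw [e]))
        · exact h
      have hub : ∀ t ∈ S s, t ≤ r (f (s : UnitAddCircle)) - y₀ := by
        rintro t (rfl | ⟨u, hu, rfl⟩)
        · linarith
        · show r (f (u : UnitAddCircle)) - y₀ ≤ r (f (s : UnitAddCircle)) - y₀
          by_contra hgt
          push_neg at hgt
          have hne : f u ≠ f a₀ := by
            intro h; rw [h, hr_c] at hgt; linarith [hβ]
          have hneq : f u ≠ f s := fun h => by rw [h] at hgt; linarith
          have hus : u < s := lt_of_le_of_ne hu.2.2 (fun h => hneq (by rw [h]))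
          refine (hmono a₀ ha₀ u hu.1 s hA).1
            ⟨x₀, u, s, hx₀, rfl, rfl, hu.2.1, hus, by linarith [hs.2]⟩ ?_
          show PosOriented (f (s : UnitAddCircle)) (f (u : UnitAddCircle)) (f a₀)
          refine ⟨r (f (s : UnitAddCircle)), r (f (u : UnitAddCircle)), y₀ + 1, hr_coe _, hr_coe _, ?_, by linarith,
            (hr_mem (f (u : UnitAddCircle))).2, by linarith⟩
          rw [show y₀ + (1:ℝ) = y₀ + ((1:ℤ):ℝ) by norm_num, coe_add_int, hy₀]
      have hmemS : r (f (s : UnitAddCircle)) - y₀ ∈ S s :=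
        Set.mem_insert_of_mem _ ⟨s, ⟨hA, hsx, le_refl s⟩, rfl⟩
      have hσs : σ s = r (f (s : UnitAddCircle)) - y₀ :=
        le_antisymm (csSup_le ⟨0, hS0 s⟩ hub) (le_csSup (hS_bdd s) hmemS)
      rw [hgs, hσs, show y₀ + (r (f (s : UnitAddCircle)) - y₀) = r (f (s : UnitAddCircle)) by ring, hr_coe]
  -- the lift property everywhere
  have hg_lift : ∀ t : ℝ, (t : UnitAddCircle) ∈ A → ((g t : ℝ) : UnitAddCircle) = f (t : UnitAddCircle) := by
    intro t hA
    have hst : ((t - (⌊t - x₀⌋ : ℝ) : ℝ) : UnitAddCircle) = (t : UnitAddCircle) :=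
      coe_eq_coe.mpr ⟨⌊t - x₀⌋, by ring⟩
    have h1 : g t = g (t - (⌊t - x₀⌋ : ℝ)) + (⌊t - x₀⌋ : ℝ) := by
      have := hg_int (t - (⌊t - x₀⌋ : ℝ)) ⌊t - x₀⌋
      rw [show t - (⌊t - x₀⌋:ℝ) + (⌊t - x₀⌋:ℝ) = t by ring] at this
      linarith
    rw [h1, coe_add_int, key _ (hfloor t) (by rw [hst]; exact hA), hst]
  -- density of the range of g
  have hdense : DenseRange g := by
    have hopenmap : IsOpenMap (fun t : ℝ => (t : UnitAddCircle)) :=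
      QuotientAddGroup.isOpenMap_coe
    have hBpre : Dense ((fun t : ℝ => (t : UnitAddCircle)) ⁻¹' B) := hB.preimage hopenmap
    refine Dense.mono ?_ hBpre
    intro w hw
    have hwB : (w : UnitAddCircle) ∈ f '' A := by rw [hsurj]; exact hw
    obtain ⟨a, haA, hfa⟩ := hwB
    obtain ⟨t, htc, -⟩ := rep_exists a 0
    have : ((g t : ℝ) : UnitAddCircle) = ((w : ℝ) : UnitAddCircle) := by
      rw [hg_lift t (by rw [htc]; exact haA), htc, hfa]
    obtain ⟨k, hk⟩ := coe_eq_coe.mp this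
    exact ⟨t + k, by rw [hg_int]; linarith⟩
  have hg_cont : Continuous g := hg_mono.continuous_of_denseRange hdense
  -- descend to the circle
  set F : UnitAddCircle → UnitAddCircle :=
    AddCircle.liftIco 1 x₀ (fun t => ((g t : ℝ) : UnitAddCircle)) with hFdef
  have hg1 : ∀ t : ℝ, g (t + 1) = g t + 1 := by
    intro t; have := hg_int t 1; push_cast at this; exact this
  have hFcont : Continuous F := by
    refine AddCircle.liftIco_continuous ?_ ?_
    · show ((g x₀ : ℝ) : UnitAddCircle) = ((g (x₀ + 1) : ℝ) : UnitAddCircle)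
      rw [hg1, show g x₀ + (1:ℝ) = g x₀ + ((1:ℤ):ℝ) by norm_num, coe_add_int]
    · exact ((AddCircle.continuous_mk' 1).comp hg_cont).continuousOn
  have hFcoe : ∀ t : ℝ, F ((t : ℝ) : UnitAddCircle) = ((g t : ℝ) : UnitAddCircle) := by
    intro t
    have hst : ((t - (⌊t - x₀⌋ : ℝ) : ℝ) : UnitAddCircle) = ((t : ℝ) : UnitAddCircle) :=
      coe_eq_coe.mpr ⟨⌊t - x₀⌋, by ring⟩
    have h1 : g t = g (t - (⌊t - x₀⌋ : ℝ)) + (⌊t - x₀⌋ : ℝ) := by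
      have := hg_int (t - (⌊t - x₀⌋ : ℝ)) ⌊t - x₀⌋
      rw [show t - (⌊t - x₀⌋:ℝ) + (⌊t - x₀⌋:ℝ) = t by ring] at this
      linarith
    rw [← hst, hFdef, AddCircle.liftIco_coe_apply (hfloor t), h1, coe_add_int]
  have hFmono : MonotoneCircOn F Set.univ := by
    intro a _ b _ c _
    constructor
    · rintro ⟨x, y, z, hx, hy, hz, h1, h2, h3⟩ hneg
      have hgx : g z ≤ g x + 1 := (hg_mono h3.le).trans_eq (hg1 x)
      rw [← hx, ← hy, ← hz, hFcoe, hFcoe, hFcoe] at hneg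
      exact not_pos_of_le (hg_mono h1.le) (hg_mono h2.le) hgx hneg
    · rintro ⟨z, y, x, hz, hy, hx, h1, h2, h3⟩ hpos
      have hgx : g x ≤ g z + 1 := (hg_mono h3.le).trans_eq (hg1 z)
      rw [← hx, ← hy, ← hz, hFcoe, hFcoe, hFcoe] at hpos
      exact not_pos_of_le (hg_mono h1.le) (hg_mono h2.le) hgx hpos
  have hFext : ∀ a ∈ A, F a = f a := by
    intro a ha
    obtain ⟨t, htc, -⟩ := rep_exists a 0
    rw [← htc, hFcoe, hg_lift t (by rw [htc]; exact ha)]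
  exact ⟨F, hFcont, hFmono, hFext⟩

end MonExtAux

theorem unique_monotone_extension
    (A B : Set UnitAddCircle) (hB : Dense B)
    (f : UnitAddCircle → UnitAddCircle) (hsurj : f '' A = B)
    (hmono : MonotoneCircOn f A) :
    ∃! F : UnitAddCircle → UnitAddCircle,
      Continuous F ∧ MonotoneCircOn F Set.univ ∧ ∀ a ∈ A, F a = f a := by
  obtain ⟨F, h1, h2, h3⟩ := MonExtAux.exists_ext A B hB f hsurj hmono
  refine ⟨F, ⟨h1, h2, h3⟩, ?_⟩
  rintro F' ⟨-, h2', h3'⟩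
  exact MonExtAux.uniq_aux A B hB f hsurj F' F h2' h2 h3' h3
end

section
/- Let F: S¹ → S¹ be a continuous surjection. Then F is monotone if and only if F has degree one and, for every y ∈ S¹, the point preimage F⁻¹(y) is a connected proper subset of S¹ (equivalently, each point preimage is contractible). -/
open Filter Topology

/-- A continuous self-map of the circle has degree one if some (equivalently, every)
continuous lift `Ft : ℝ → ℝ` of `F` (meaning `e ∘ Ft = F ∘ e` for the projection
`e : ℝ → ℝ/ℤ`) satisfies `Ft (t+1) = Ft t + 1` for all `t`. -/
def HasDegreeOne (F : UnitAddCircle → UnitAddCircle) : Prop :=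
  ∃ Ft : ℝ → ℝ, Continuous Ft ∧
    (∀ t : ℝ, ((Ft t : ℝ) : UnitAddCircle) = F (t : UnitAddCircle)) ∧
    ∀ t : ℝ, Ft (t + 1) = Ft t + 1

open Set Function

/-!
Lift `F` to a continuous `g : ℝ → ℝ`; then `g (x + 1) - g x` is a constant integer `d`.
A subset `K` of the circle is connected iff no two points of `K` are separated, on both arcs
between them, by points outside `K`. A monotone surjection cannot have such a configuration in
a fiber. Conversely, if the fibers are connected and `g x ≤ g (x + 1)`, then `g` is
nondecreasing: a descent `g s > g t` with `t < s + 1` gives a generic level that `g` crosses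
once in `(s, t)` and once in `(t, s + 1)`. A nondecreasing lift of degree one induces a monotone
map; for a monotone `F`, the cases `d < 0` (run the argument on `-g`), `d = 0` (`g` is constant)
and `d ≥ 2` (three points whose images are reversed) are impossible.
-/

section Orientation

variable {a b c : UnitAddCircle}

lemma posOriented_coe {x y z : ℝ} (hxy : x < y) (hyz : y < z) (hzx : z < x + 1) :
    PosOriented x y z :=
  ⟨x, y, z, rfl, rfl, rfl, hxy, hyz, hzx⟩

theorem posOriented_iff_sbtw : PosOriented a b c ↔ sbtw a b c := by
  constructor
  · rintro ⟨x, y, z, rfl, rfl, rfl, hxy, hyz, hzx⟩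
    rw [sbtw_iff_not_btw, QuotientAddGroup.btw_coe_iff, not_le,
      (toIcoMod_eq_iff (c := y + 1) _).2 ⟨⟨by linarith, by linarith⟩, -1, by simp⟩,
      (toIocMod_eq_iff (c := x + 1) _).2 ⟨⟨by linarith, by linarith⟩, -1, by simp⟩]
    linarith
  · obtain ⟨x, rfl⟩ := QuotientAddGroup.mk_surjective a
    obtain ⟨y, hy, rfl⟩ : ∃ y ∈ Ico x (x + 1), (y : UnitAddCircle) = b :=
      ⟨_, (AddCircle.equivIco 1 x b).2, AddCircle.coe_equivIco⟩
    obtain ⟨z, hz, rfl⟩ : ∃ z ∈ Ioc x (x + 1), (z : UnitAddCircle) = c :=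
      ⟨_, (AddCircle.equivIoc 1 x c).2, AddCircle.coe_equivIoc⟩
    intro h
    have hyz := QuotientAddGroup.btw_coe_iff.1 h.btw
    rw [(toIcoMod_eq_self _).2 hy, (toIocMod_eq_self _).2 hz] at hyz
    refine posOriented_coe (hy.1.lt_of_ne ?_) (hyz.lt_of_ne ?_) (hz.2.lt_of_ne ?_)
    · rintro rfl
      exact sbtw_irrefl_left h
    · rintro rfl
      exact sbtw_irrefl_right h
    · rintro rfl
      rw [AddCircle.coe_add_period] at h
      exact sbtw_irrefl_left_right h

lemma PosOriented.not_negOriented (h : PosOriented a b c) : ¬ NegOriented a b c := by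
  rw [NegOriented, posOriented_iff_sbtw] at *
  exact sbtw_asymm h

lemma NegOriented.ne (h : NegOriented a b c) : a ≠ b ∧ b ≠ c ∧ c ≠ a := by
  rw [NegOriented, posOriented_iff_sbtw] at h
  refine ⟨?_, ?_, ?_⟩ <;> rintro rfl
  exacts [sbtw_irrefl_right h, sbtw_irrefl_left h, sbtw_irrefl_left_right h]

lemma posOriented_or_negOriented (hab : a ≠ b) (hbc : b ≠ c) (hca : c ≠ a) :
    PosOriented a b c ∨ NegOriented a b c := by
  simp only [NegOriented, posOriented_iff_sbtw, sbtw_iff_not_btw]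
  by_contra! h
  obtain h | h | h := h.1.antisymm h.2
  exacts [hbc h.symm, hab h.symm, hca h.symm]

lemma monotoneCircOn_univ_iff {F : UnitAddCircle → UnitAddCircle} :
    MonotoneCircOn F univ ↔ ∀ a b c, PosOriented a b c → ¬ NegOriented (F a) (F b) (F c) :=
  ⟨fun h a b c => (h a trivial b trivial c trivial).1,
    fun h a _ b _ c _ => ⟨h a b c, h c b a⟩⟩

end Orientation

section Points

instance : Infinite UnitAddCircle :=
  have := (Set.Ico_infinite (by norm_num : (0 : ℝ) < 0 + 1)).to_subtype
  Infinite.of_injective _ (AddCircle.equivIco 1 0).symm.injective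

lemma countable_preimage_coe (y : UnitAddCircle) :
    ((↑) ⁻¹' {y} : Set ℝ).Countable := by
  obtain ⟨x, rfl⟩ := QuotientAddGroup.mk_surjective y
  refine (countable_range fun n : ℤ => x + n).mono fun v hv => ?_
  obtain ⟨n, hn⟩ := (AddCircle.coe_eq_zero_iff 1).1 (sub_eq_zero.2 hv)
  exact ⟨n, by simp at hn; linarith⟩

lemma exists_mem_Ioo_coe_ne_ne {a b : ℝ} (hab : a < b) (y z : UnitAddCircle) :
    ∃ v ∈ Ioo a b, (v : UnitAddCircle) ≠ y ∧ (v : UnitAddCircle) ≠ z := by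
  have hc : ((↑) ⁻¹' {y} ∪ (↑) ⁻¹' {z} : Set ℝ).Countable :=
    (countable_preimage_coe y).union (countable_preimage_coe z)
  obtain ⟨v, hv, hav, hvb⟩ := (hc.dense_compl ℝ).exists_between hab
  simp only [mem_compl_iff, mem_union, mem_preimage, mem_singleton_iff, not_or] at hv
  exact ⟨v, ⟨hav, hvb⟩, hv⟩

end Points

section Preconnected

variable {K : Set UnitAddCircle}

theorem isPreconnected_iff_ordConnected_Ioo_inter_preimage {t : ℝ} (ht : (t : UnitAddCircle) ∉ K) :
    IsPreconnected K ↔ OrdConnected (Ioo t (t + 1) ∩ (↑) ⁻¹' K) := by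
  let φ := AddCircle.openPartialHomeomorphCoe (1 : ℝ) t
  have hK : K ⊆ φ.target := fun w hw hwt => ht (hwt ▸ hw)
  change IsPreconnected K ↔ OrdConnected (φ.source ∩ φ ⁻¹' K)
  rw [← isPreconnected_iff_ordConnected, ← φ.symm_image_eq_source_inter_preimage hK]
  refine ⟨fun h => h.image _ (φ.continuousOn_symm.mono hK), fun h => ?_⟩
  rw [← φ.toPartialEquiv.image_symm_image_of_subset_target hK]
  exact h.image _ (φ.continuousOn.mono (φ.symm.mapsTo.mono_left hK).image_subset)

theorem isPreconnected_iff_forall_unlinked :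
    IsPreconnected K ↔ ∀ p t q r : ℝ, p < t → t < q → q < r → r < p + 1 →
      (p : UnitAddCircle) ∈ K → (q : UnitAddCircle) ∈ K →
      (t : UnitAddCircle) ∈ K ∨ (r : UnitAddCircle) ∈ K := by
  constructor
  · intro hK p t q r hpt htq hqr hrp hp hq
    by_contra! h
    have hI := (isPreconnected_iff_ordConnected_Ioo_inter_preimage h.1).1 hK
    have hr := hI.out ⟨⟨by linarith, by linarith⟩, hq⟩
      ⟨⟨by linarith, by linarith⟩, by rwa [mem_preimage, AddCircle.coe_add_period]⟩
      ⟨hqr.le, hrp.le⟩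
    exact h.2 hr.2
  · intro hK
    by_cases huniv : K = univ
    · exact huniv ▸ isPreconnected_univ
    obtain ⟨w, hw⟩ := (ne_univ_iff_exists_notMem K).1 huniv
    obtain ⟨t, rfl⟩ := QuotientAddGroup.mk_surjective w
    rw [isPreconnected_iff_ordConnected_Ioo_inter_preimage hw]
    refine ⟨fun p hp q hq x hx => ⟨⟨hp.1.1.trans_le hx.1, hx.2.trans_lt hq.1.2⟩, ?_⟩⟩
    rcases hx.1.eq_or_lt with rfl | hpx
    · exact hp.2
    rcases hx.2.eq_or_lt with rfl | hxq
    · exact hq.2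
    refine (hK p x q (t + 1) hpx hxq hq.1.2 (by linarith [hp.1.1]) hp.2 hq.2).resolve_right ?_
    rwa [AddCircle.coe_add_period]

end Preconnected

section Lift

variable {F : UnitAddCircle → UnitAddCircle} {g : ℝ → ℝ}

theorem exists_continuous_lift (hF : Continuous F) :
    ∃ g : ℝ → ℝ, Continuous g ∧ ∀ x : ℝ, F x = g x := by
  obtain ⟨y, hy⟩ := QuotientAddGroup.mk_surjective (F (0 : ℝ))
  obtain ⟨G, ⟨-, hG⟩, -⟩ := (AddCircle.isCoveringMap_coe (1 : ℝ)).existsUnique_continuousMap_lifts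
    ⟨fun x : ℝ => F x, hF.comp (AddCircle.continuous_mk' 1)⟩ 0 y hy
  exact ⟨G, G.continuous, fun x => (congrFun hG x).symm⟩

theorem exists_int_map_add_one (hg : Continuous g) (hFg : ∀ x : ℝ, F x = g x) :
    ∃ d : ℤ, ∀ x, g (x + 1) = g x + d := by
  have hint : ∀ x, ∃ n : ℤ, (n : ℝ) = g (x + 1) - g x := by
    intro x
    have : ((g (x + 1) - g x : ℝ) : UnitAddCircle) = 0 := by
      rw [AddCircle.coe_sub, ← hFg, ← hFg, AddCircle.coe_add_period, sub_self]
    simpa using (AddCircle.coe_eq_zero_iff 1).1 this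
  choose k hk using hint
  have hk_cont : Continuous k := by
    have hcast : ((↑) ∘ k : ℝ → ℝ) = fun x => g (x + 1) - g x := funext hk
    rw [Int.isClosedEmbedding_coe_real.isEmbedding.continuous_iff, hcast]
    exact (hg.comp (continuous_add_const 1)).sub hg
  refine ⟨k 0, fun x => ?_⟩
  rw [← PreconnectedSpace.constant inferInstance hk_cont (x := x), hk]
  ring

lemma map_add_nat {d : ℝ} (hper : ∀ x, g (x + 1) = g x + d) (x : ℝ) (n : ℕ) :
    g (x + n) = g x + n * d := by
  induction n with
  | zero => simp
  | succ n ih => rw [Nat.cast_succ, ← add_assoc, hper, ih]; ring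

lemma surjective_of_map_add_one (hg : Continuous g) {d : ℝ} (hd : 0 < d)
    (hper : ∀ x, g (x + 1) = g x + d) : Surjective g := by
  intro v
  obtain ⟨n, hn⟩ := exists_lt_nsmul hd |v - g 0|
  rw [nsmul_eq_mul] at hn
  have h₁ := map_add_nat hper 0 n
  rw [zero_add] at h₁
  have h₂ := map_add_nat hper (-n) n
  rw [neg_add_cancel] at h₂
  refine mem_range_of_exists_le_of_exists_ge hg ⟨-n, ?_⟩ ⟨n, ?_⟩
  · linarith [neg_abs_le (v - g 0)]
  · linarith [le_abs_self (v - g 0)]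

lemma monotone_of_forall_le_of_lt_add_one {α : Type*} [Preorder α] {f : ℝ → α}
    (h : ∀ s t, s ≤ t → t < s + 1 → f s ≤ f t) : Monotone f := by
  intro s t hst
  obtain ⟨n, hn⟩ := exists_nat_gt (t - s)
  have hn0 : (0 : ℝ) < n := by linarith
  set δ := (t - s) / n
  have hδ : 0 ≤ δ := div_nonneg (by linarith) hn0.le
  have hδ1 : δ < 1 := (div_lt_one hn0).2 hn
  have hstep : Monotone fun k : ℕ => f (s + k * δ) :=
    monotone_nat_of_le_succ fun k => h _ _ (by push_cast; linarith) (by push_cast; linarith)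
  have hnδ : s + n * δ = t := by rw [mul_div_cancel₀ _ hn0.ne']; ring
  simpa [hnδ] using hstep (Nat.zero_le n)

theorem monotone_lift_of_isPreconnected_fiber (hg : Continuous g) (hFg : ∀ x : ℝ, F x = g x)
    (hg1 : ∀ x, g x ≤ g (x + 1)) (hconn : ∀ y, IsPreconnected (F ⁻¹' {y})) : Monotone g := by
  refine monotone_of_forall_le_of_lt_add_one fun s t hst hts => ?_
  by_contra! hlt
  obtain ⟨v, hv, hvs, hvt⟩ := exists_mem_Ioo_coe_ne_ne hlt (F s) (F t)
  obtain ⟨p, hp, hpv⟩ := intermediate_value_Ioo' hst hg.continuousOn hv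
  obtain ⟨q, hq, hqv⟩ := intermediate_value_Ioo hts.le hg.continuousOn
    ⟨hv.1, hv.2.trans_le (hg1 s)⟩
  have := isPreconnected_iff_forall_unlinked.1 (hconn v) p t q (s + 1) hp.2 hq.1 hq.2
    (by linarith [hp.1]) (by simp [hFg, hpv]) (by simp [hFg, hqv])
  rw [AddCircle.coe_add_period] at this
  exact this.elim (fun h => hvt h.symm) (fun h => hvs h.symm)

theorem monotoneCircOn_of_monotone_lift (hmono : Monotone g) (hper : ∀ x, g (x + 1) = g x + 1)
    (hFg : ∀ x : ℝ, F x = g x) : MonotoneCircOn F univ := by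
  refine monotoneCircOn_univ_iff.2 ?_
  rintro _ _ _ ⟨x, y, z, rfl, rfl, rfl, hxy, hyz, hzx⟩ hneg
  simp only [hFg] at hneg
  obtain ⟨hxy', hyz', hzx'⟩ := hneg.ne
  have hzx'' := hmono hzx.le
  rw [hper] at hzx''
  refine (posOriented_coe ((hmono hxy.le).lt_of_ne ?_) ((hmono hyz.le).lt_of_ne ?_)
    (hzx''.lt_of_ne ?_)).not_negOriented hneg
  · exact fun h => hxy' (congrArg _ h)
  · exact fun h => hyz' (congrArg _ h)
  · exact fun h => hzx' (by rw [h, AddCircle.coe_add_period])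

lemma exists_lt_of_monotone_lift (hg : Continuous g) (hmono : Monotone g) {d : ℝ} (hd : 0 < d)
    (hper : ∀ x, g (x + 1) = g x + d) {v₁ v₂ v₃ : ℝ} (h₁₂ : v₁ < v₂) (h₂₃ : v₂ < v₃)
    (h₃₁ : v₃ < v₁ + d) : ∃ x₁ x₂ x₃, x₁ < x₂ ∧ x₂ < x₃ ∧ x₃ < x₁ + 1 ∧
      g x₁ = v₁ ∧ g x₂ = v₂ ∧ g x₃ = v₃ := by
  obtain ⟨x₁, rfl⟩ := surjective_of_map_add_one hg hd hper v₁
  obtain ⟨x₂, rfl⟩ := surjective_of_map_add_one hg hd hper v₂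
  obtain ⟨x₃, rfl⟩ := surjective_of_map_add_one hg hd hper v₃
  rw [← hper] at h₃₁
  exact ⟨x₁, x₂, x₃, hmono.reflect_lt h₁₂, hmono.reflect_lt h₂₃, hmono.reflect_lt h₃₁,
    rfl, rfl, rfl⟩

end Lift

section MonotoneCircOn

variable {F : UnitAddCircle → UnitAddCircle} {g : ℝ → ℝ}

lemma MonotoneCircOn.apply_eq_of_unlinked (hmono : MonotoneCircOn F univ) {p t q r : ℝ}
    (hpt : p < t) (htq : t < q) (hqr : q < r) (hrp : r < p + 1) (hpq : F p = F q)
    (ht : F t ≠ F p) (hr : F r ≠ F p) : F t = F r := by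
  by_contra htr
  have h₁ := monotoneCircOn_univ_iff.1 hmono t q r (posOriented_coe htq hqr (by linarith))
  have h₂ := monotoneCircOn_univ_iff.1 hmono r (p + 1 : ℝ) (t + 1 : ℝ)
    (posOriented_coe hrp (by linarith) (by linarith))
  rw [AddCircle.coe_add_period, AddCircle.coe_add_period] at h₂
  rw [← hpq] at h₁
  exact (posOriented_or_negOriented ht hr.symm (Ne.symm htr)).elim h₂ h₁

theorem isPreconnected_fiber_of_monotoneCircOn (hsurj : Surjective F)
    (hmono : MonotoneCircOn F univ) (y : UnitAddCircle) : IsPreconnected (F ⁻¹' {y}) := by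
  rw [isPreconnected_iff_forall_unlinked]
  intro p t q r hpt htq hqr hrp hp hq
  by_contra! h
  simp only [mem_preimage, mem_singleton_iff] at hp hq h
  have htr := hmono.apply_eq_of_unlinked hpt htq hqr hrp (hp.trans hq.symm) (hp ▸ h.1) (hp ▸ h.2)
  obtain ⟨w, hw⟩ := Infinite.exists_notMem_finset {y, F t}
  simp only [Finset.mem_insert, Finset.mem_singleton, not_or] at hw
  obtain ⟨z, rfl⟩ := hsurj w
  obtain ⟨u, hu, rfl⟩ : ∃ u ∈ Ico p (p + 1), (u : UnitAddCircle) = z :=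
    ⟨_, (AddCircle.equivIco 1 p z).2, AddCircle.coe_equivIco⟩
  have hup : p < u := hu.1.lt_of_ne (by rintro rfl; exact hw.1 hp)
  rcases lt_or_gt_of_ne (show u ≠ q by rintro rfl; exact hw.1 hq) with huq | hqu
  · have := hmono.apply_eq_of_unlinked hup huq hqr hrp (hp.trans hq.symm) (hp ▸ hw.1) (hp ▸ h.2)
    exact hw.2 (this.trans htr.symm)
  · have := hmono.apply_eq_of_unlinked hpt htq hqu hu.2 (hp.trans hq.symm) (hp ▸ h.1) (hp ▸ hw.1)
    exact hw.2 this.symm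

section Degree

variable (hg : Continuous g) (hFg : ∀ x : ℝ, F x = g x)
  (hconn : ∀ y, IsPreconnected (F ⁻¹' {y})) {d : ℤ} (hper : ∀ x, g (x + 1) = g x + d)
include hg hFg hconn hper

theorem MonotoneCircOn.lift_degree_nonneg (hmono : MonotoneCircOn F univ) : 0 ≤ d := by
  by_contra! hd
  have hd' : (1 : ℝ) ≤ -d := by exact_mod_cast Int.le_neg_of_le_neg (by omega)
  have hper' : ∀ x, (-g) (x + 1) = (-g) x + (-d : ℤ) := fun x => by simp [hper]; ring
  have hmono' : Monotone (-g) :=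
    monotone_lift_of_isPreconnected_fiber (F := -F) hg.neg (fun x => by simp [hFg])
      (fun x => by rw [hper']; push_cast; linarith)
      (fun y => by simpa [preimage, neg_eq_iff_eq_neg] using hconn (-y))
  obtain ⟨x₁, x₂, x₃, h₁₂, h₂₃, h₃₁, hx₁, hx₂, hx₃⟩ := exists_lt_of_monotone_lift hg.neg hmono'
    (by push_cast; linarith) hper' (v₁ := 0) (v₂ := 1 / 3) (v₃ := 2 / 3) (by norm_num) (by norm_num)
    (by push_cast; linarith)
  refine monotoneCircOn_univ_iff.1 hmono _ _ _ (posOriented_coe h₁₂ h₂₃ h₃₁) ?_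
  simp only [Pi.neg_apply, neg_eq_iff_eq_neg] at hx₁ hx₂ hx₃
  rw [NegOriented, hFg, hFg, hFg, hx₁, hx₂, hx₃]
  exact posOriented_coe (by norm_num) (by norm_num) (by norm_num)

theorem lift_degree_ne_zero (hsurj : Surjective F) : d ≠ 0 := by
  rintro rfl
  simp only [Int.cast_zero, add_zero] at hper
  have hmono := monotone_lift_of_isPreconnected_fiber hg hFg (fun x => (hper x).ge) hconn
  have hconst : ∀ x, g x = g 0 := by
    intro x
    obtain ⟨n, hn⟩ := exists_nat_gt |x|
    have h₁ := map_add_nat (d := 0) (by simpa using hper) 0 n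
    have h₂ := map_add_nat (d := 0) (by simpa using hper) (-n) n
    simp only [zero_add, mul_zero, add_zero, neg_add_cancel] at h₁ h₂
    refine le_antisymm (h₁ ▸ hmono ?_) (h₂ ▸ hmono ?_) <;> linarith [le_abs_self x, neg_abs_le x]
  obtain ⟨w, hw⟩ := exists_ne (g 0 : UnitAddCircle)
  obtain ⟨z, rfl⟩ := hsurj w
  obtain ⟨x, rfl⟩ := QuotientAddGroup.mk_surjective z
  exact hw (by rw [hFg, hconst])

theorem MonotoneCircOn.lift_degree_lt_two (hmono : MonotoneCircOn F univ) : d < 2 := by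
  by_contra! hd
  have hd' : (2 : ℝ) ≤ d := by exact_mod_cast hd
  have hmono' := monotone_lift_of_isPreconnected_fiber hg hFg
    (fun x => by rw [hper]; linarith) hconn
  obtain ⟨x₁, x₂, x₃, h₁₂, h₂₃, h₃₁, hx₁, hx₂, hx₃⟩ := exists_lt_of_monotone_lift hg hmono'
    (by linarith) hper (v₁ := 0) (v₂ := 1 / 2) (v₃ := 5 / 4) (by norm_num) (by norm_num)
    (by linarith)
  refine monotoneCircOn_univ_iff.1 hmono _ _ _ (posOriented_coe h₁₂ h₂₃ h₃₁) ?_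
  rw [NegOriented, hFg, hFg, hFg, hx₁, hx₂, hx₃]
  convert posOriented_coe (x := 1 / 4) (y := 1 / 2) (z := 1) (by norm_num) (by norm_num)
    (by norm_num) using 1
  · rw [show (5 / 4 : ℝ) = 1 / 4 + 1 by norm_num, AddCircle.coe_add_period]
  · rw [AddCircle.coe_zero, AddCircle.coe_period]

end Degree

end MonotoneCircOn

theorem monotone_iff_degree_one_connected_fibers
    (F : UnitAddCircle → UnitAddCircle) (hF : Continuous F)
    (hsurj : Function.Surjective F) :
    MonotoneCircOn F Set.univ ↔
      HasDegreeOne F ∧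
        ∀ y : UnitAddCircle, IsConnected (F ⁻¹' {y}) ∧ F ⁻¹' {y} ≠ Set.univ := by
  constructor
  · intro hmono
    have hconn := isPreconnected_fiber_of_monotoneCircOn hsurj hmono
    obtain ⟨g, hg, hFg⟩ := exists_continuous_lift hF
    obtain ⟨d, hper⟩ := exists_int_map_add_one hg hFg
    have hd : d = 1 := by
      have := hmono.lift_degree_nonneg hg hFg hconn hper
      have := lift_degree_ne_zero hg hFg hconn hper hsurj
      have := hmono.lift_degree_lt_two hg hFg hconn hper
      omega
    refine ⟨⟨g, hg, fun t => (hFg t).symm, fun t => by simp [hper, hd]⟩,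
      fun y => ⟨⟨hsurj y, hconn y⟩, fun h => ?_⟩⟩
    obtain ⟨w, hw⟩ := exists_ne y
    obtain ⟨x, rfl⟩ := hsurj w
    exact hw (h.symm ▸ mem_univ x : x ∈ F ⁻¹' {y})
  · rintro ⟨⟨g, hg, hgF, hper⟩, hfib⟩
    have hFg : ∀ x : ℝ, F x = g x := fun x => (hgF x).symm
    exact monotoneCircOn_of_monotone_lift
      (monotone_lift_of_isPreconnected_fiber hg hFg (fun x => by simp [hper])
        fun y => (hfib y).1.isPreconnected) hper hFg
end

section
/- Let h be an orientation-preserving homeomorphism of S¹, let a and b be two distinct fixed points of h, and suppose that the open arc J traversed counterclockwise from a to b is nonempty and contains no fixed points of h. Then h(J) = J, and exactly one of the following holds: for every p ∈ J one has hⁿ(p) → b and h⁻ⁿ(p) → a as n → ∞, or for every p ∈ J one has hⁿ(p) → a and h⁻ⁿ(p) → b as n → ∞. -/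
open Filter Topology

/-!
Orientation preservation makes `h` and `h⁻¹` map the arc `J = (a, b)` into itself. Measured
from a real lift `x₀` of `a`, by the coordinate with values in `[x₀, x₀ + 1)`, the arc `J` is an
interval, and the displacement of this coordinate under `h` is continuous and never zero on `J`;
by the intermediate value theorem it has a constant sign. Along an orbit the coordinate is then
monotone and bounded, so the orbit converges to a fixed point of `h`, which cannot lie in `J`:
the limit is `b` or `a` according to the sign, and `h⁻¹` moves points the other way.
-/

open Set Function

noncomputable def icoLift (x₀ : ℝ) (y : UnitAddCircle) : ℝ := AddCircle.equivIco 1 x₀ y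

section icoLift

variable {x₀ : ℝ}

lemma icoLift_mem (y : UnitAddCircle) : icoLift x₀ y ∈ Ico x₀ (x₀ + 1) :=
  (AddCircle.equivIco 1 x₀ y).2

@[simp]
lemma coe_icoLift (y : UnitAddCircle) : ((icoLift x₀ y : ℝ) : UnitAddCircle) = y :=
  AddCircle.coe_equivIco

lemma icoLift_coe {t : ℝ} (ht : t ∈ Ico x₀ (x₀ + 1)) : icoLift x₀ t = t :=
  AddCircle.equivIco_coe_of_mem ht

lemma icoLift_injective : Injective (icoLift x₀) :=
  fun y z hyz => by rw [← coe_icoLift y, hyz, coe_icoLift]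

lemma continuousAt_icoLift {y : UnitAddCircle} (hy : y ≠ x₀) : ContinuousAt (icoLift x₀) y :=
  continuous_subtype_val.continuousAt.comp (AddCircle.continuousAt_equivIco 1 x₀ hy)

lemma tendsto_of_tendsto_icoLift {ι : Type*} {l : Filter ι} {u : ι → UnitAddCircle} {c : ℝ}
    (hu : Tendsto (fun i => icoLift x₀ (u i)) l (𝓝 c)) : Tendsto u l (𝓝 (c : UnitAddCircle)) := by
  simpa [Function.comp_def] using ((AddCircle.continuous_mk' 1).tendsto c).comp hu

lemma posOriented_coe_iff {b c : UnitAddCircle} :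
    PosOriented (x₀ : UnitAddCircle) b c ↔ x₀ < icoLift x₀ b ∧ icoLift x₀ b < icoLift x₀ c := by
  constructor
  · rintro ⟨x, y, z, hx, rfl, rfl, hxy, hyz, hzx⟩
    have hshift : ∀ w, x < w → w < x + 1 → icoLift x₀ w = w - x + x₀ := fun w h₁ h₂ => by
      rw [← icoLift_coe (x₀ := x₀) (t := w - x + x₀) ⟨by linarith, by linarith⟩,
        AddCircle.coe_add, AddCircle.coe_sub, hx, sub_add_cancel]
    rw [hshift y hxy (by linarith), hshift z (by linarith) hzx]
    constructor <;> linarith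
  · rintro ⟨h₁, h₂⟩
    exact ⟨x₀, _, _, rfl, coe_icoLift b, coe_icoLift c, h₁, h₂, (icoLift_mem c).2⟩

lemma mem_arc_coe_iff {b x : UnitAddCircle} :
    x ∈ Arc x₀ b ↔ icoLift x₀ x ∈ Ioo x₀ (icoLift x₀ b) :=
  posOriented_coe_iff

lemma coe_mem_arc {b : UnitAddCircle} {t : ℝ} (ht : t ∈ Ioo x₀ (icoLift x₀ b)) :
    (t : UnitAddCircle) ∈ Arc x₀ b := by
  rwa [mem_arc_coe_iff, icoLift_coe ⟨ht.1.le, ht.2.trans (icoLift_mem b).2⟩]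

lemma ne_of_mem_arc {b x : UnitAddCircle} (hx : x ∈ Arc x₀ b) : x ≠ x₀ := by
  rintro rfl
  rw [mem_arc_coe_iff, icoLift_coe (left_mem_Ico.2 (lt_add_one x₀))] at hx
  exact hx.1.false

lemma arc_coe_eq_image (b : UnitAddCircle) :
    Arc x₀ b = ((↑) : ℝ → UnitAddCircle) '' Ioo x₀ (icoLift x₀ b) :=
  Subset.antisymm (fun x hx => ⟨icoLift x₀ x, mem_arc_coe_iff.1 hx, coe_icoLift x⟩)
    (image_subset_iff.2 fun _ ht => coe_mem_arc ht)

end icoLift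

lemma isPreconnected_arc (a b : UnitAddCircle) : IsPreconnected (Arc a b) := by
  obtain ⟨x₀, rfl⟩ := QuotientAddGroup.mk_surjective a
  rw [arc_coe_eq_image]
  exact isPreconnected_Ioo.image _ (AddCircle.continuous_mk' 1).continuousOn

lemma image_arc_eq {h : UnitAddCircle ≃ₜ UnitAddCircle} (hOP : OrientationPreserving h)
    {a b : UnitAddCircle} (ha : h a = a) (hb : h b = b) : h '' Arc a b = Arc a b := by
  refine Subset.antisymm (image_subset_iff.2 fun x hx => by
    have := hOP _ _ _ hx; rwa [ha, hb] at this)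
    fun x hx => ⟨h.symm x, ?_, h.apply_symm_apply x⟩
  obtain ⟨x₀, rfl⟩ := QuotientAddGroup.mk_surjective a
  by_contra hy
  have hx₀ : icoLift x₀ (h.symm x) ≠ x₀ := fun he => by
    have : h.symm x = x₀ := by rw [← coe_icoLift (h.symm x), he]
    exact ne_of_mem_arc hx (by rw [← ha, ← this, h.apply_symm_apply])
  have hb' : icoLift x₀ (h.symm x) ≠ icoLift x₀ b := fun he => by
    have : h.symm x = b := icoLift_injective he
    exact (mem_arc_coe_iff.1 hx).2.ne (by rw [← hb, ← this, h.apply_symm_apply])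
  -- `h⁻¹ x` lies beyond `b`, hence so does `x = h (h⁻¹ x)`
  have hbeyond : PosOriented (x₀ : UnitAddCircle) b (h.symm x) := by
    rw [mem_arc_coe_iff, mem_Ioo, not_and, not_lt] at hy
    have hlow : x₀ ≤ icoLift x₀ (h.symm x) := (icoLift_mem _).1
    exact posOriented_coe_iff.2 ⟨(mem_arc_coe_iff.1 hx).1.trans (mem_arc_coe_iff.1 hx).2,
      (hy (hlow.lt_of_ne' hx₀)).lt_of_ne' hb'⟩
  have := hOP _ _ _ hbeyond
  rw [ha, hb, h.apply_symm_apply, posOriented_coe_iff] at this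
  exact (mem_arc_coe_iff.1 hx).2.not_gt this.2

section MonotoneSequence

variable {α : Type*} [ConditionallyCompleteLinearOrder α] [TopologicalSpace α] [OrderTopology α]
  {u : ℕ → α} {l r : α}

theorem Monotone.tendsto_of_mem_Ioo_of_not_tendsto (hu : Monotone u) (hmem : ∀ n, u n ∈ Ioo l r)
    (hlim : ∀ c ∈ Ioo l r, ¬Tendsto u atTop (𝓝 c)) : Tendsto u atTop (𝓝 r) := by
  have hbdd : BddAbove (range u) := ⟨r, forall_mem_range.2 fun n => (hmem n).2.le⟩
  have hsup := tendsto_atTop_ciSup hu hbdd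
  obtain hlt | heq := (ciSup_le fun n => (hmem n).2.le).lt_or_eq
  · exact absurd hsup (hlim _ ⟨(hmem 0).1.trans_le (le_ciSup hbdd 0), hlt⟩)
  · rwa [heq] at hsup

theorem Antitone.tendsto_of_mem_Ioo_of_not_tendsto (hu : Antitone u) (hmem : ∀ n, u n ∈ Ioo l r)
    (hlim : ∀ c ∈ Ioo l r, ¬Tendsto u atTop (𝓝 c)) : Tendsto u atTop (𝓝 l) :=
  Monotone.tendsto_of_mem_Ioo_of_not_tendsto (α := αᵒᵈ) hu.dual_right
    (fun n => ⟨(hmem n).2, (hmem n).1⟩) fun c hc => hlim c ⟨hc.2, hc.1⟩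

end MonotoneSequence

section ArcDynamics

variable {f : UnitAddCircle → UnitAddCircle} {x₀ : ℝ} {b : UnitAddCircle}

lemma not_tendsto_icoLift_iterate (hf : Continuous f) (hfix : ∀ x ∈ Arc x₀ b, f x ≠ x)
    (p : UnitAddCircle) (c : ℝ) (hc : c ∈ Ioo x₀ (icoLift x₀ b)) :
    ¬Tendsto (fun n => icoLift x₀ (f^[n] p)) atTop (𝓝 c) := fun hlim =>
  hfix _ (coe_mem_arc hc)
    (isFixedPt_of_tendsto_iterate (tendsto_of_tendsto_icoLift hlim) hf.continuousAt)

lemma tendsto_iterate_of_forall_lt_icoLift (hf : Continuous f)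
    (hmaps : MapsTo f (Arc x₀ b) (Arc x₀ b)) (hfix : ∀ x ∈ Arc x₀ b, f x ≠ x)
    (hfwd : ∀ x ∈ Arc x₀ b, icoLift x₀ x < icoLift x₀ (f x)) {p : UnitAddCircle}
    (hp : p ∈ Arc x₀ b) : Tendsto (fun n => f^[n] p) atTop (𝓝 b) := by
  have hmono : Monotone fun n => icoLift x₀ (f^[n] p) := monotone_nat_of_le_succ fun n => by
    rw [iterate_succ_apply']
    exact (hfwd _ (hmaps.iterate n hp)).le
  simpa using tendsto_of_tendsto_icoLift (hmono.tendsto_of_mem_Ioo_of_not_tendsto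
    (fun n => mem_arc_coe_iff.1 (hmaps.iterate n hp)) (not_tendsto_icoLift_iterate hf hfix p))

lemma tendsto_iterate_of_forall_icoLift_lt (hf : Continuous f)
    (hmaps : MapsTo f (Arc x₀ b) (Arc x₀ b)) (hfix : ∀ x ∈ Arc x₀ b, f x ≠ x)
    (hbwd : ∀ x ∈ Arc x₀ b, icoLift x₀ (f x) < icoLift x₀ x) {p : UnitAddCircle}
    (hp : p ∈ Arc x₀ b) : Tendsto (fun n => f^[n] p) atTop (𝓝 (x₀ : UnitAddCircle)) := by
  have hanti : Antitone fun n => icoLift x₀ (f^[n] p) := antitone_nat_of_succ_le fun n => by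
    rw [iterate_succ_apply']
    exact (hbwd _ (hmaps.iterate n hp)).le
  exact tendsto_of_tendsto_icoLift (hanti.tendsto_of_mem_Ioo_of_not_tendsto
    (fun n => mem_arc_coe_iff.1 (hmaps.iterate n hp)) (not_tendsto_icoLift_iterate hf hfix p))

lemma forall_lt_icoLift_or_forall_icoLift_lt (hf : Continuous f)
    (hmaps : MapsTo f (Arc x₀ b) (Arc x₀ b)) (hfix : ∀ x ∈ Arc x₀ b, f x ≠ x) :
    (∀ x ∈ Arc x₀ b, icoLift x₀ x < icoLift x₀ (f x)) ∨
      ∀ x ∈ Arc x₀ b, icoLift x₀ (f x) < icoLift x₀ x := by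
  by_contra! ⟨⟨x, hx, hfx⟩, ⟨y, hy, hfy⟩⟩
  have hcont : ContinuousOn (icoLift x₀) (Arc x₀ b) := fun z hz =>
    (continuousAt_icoLift (ne_of_mem_arc hz)).continuousWithinAt
  obtain ⟨z, hz, hfz⟩ := (isPreconnected_arc _ _).intermediate_value₂ hy hx hcont
    (hcont.comp hf.continuousOn hmaps) hfy hfx
  exact hfix z hz (icoLift_injective hfz).symm

end ArcDynamics

lemma tendsto_iterate_of_image_arc_eq {h : UnitAddCircle ≃ₜ UnitAddCircle} {x₀ : ℝ}
    {b : UnitAddCircle} (himage : h '' Arc x₀ b = Arc x₀ b) (hfix : ∀ x ∈ Arc x₀ b, h x ≠ x) :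
    (∀ p ∈ Arc x₀ b, Tendsto (fun n => (⇑h)^[n] p) atTop (𝓝 b) ∧
        Tendsto (fun n => (⇑h.symm)^[n] p) atTop (𝓝 (x₀ : UnitAddCircle))) ∨
      ∀ p ∈ Arc x₀ b, Tendsto (fun n => (⇑h)^[n] p) atTop (𝓝 (x₀ : UnitAddCircle)) ∧
        Tendsto (fun n => (⇑h.symm)^[n] p) atTop (𝓝 b) := by
  have hmaps : MapsTo h (Arc x₀ b) (Arc x₀ b) := (mapsTo_image h _).mono_right himage.subset
  have hmaps_symm : MapsTo h.symm (Arc x₀ b) (Arc x₀ b) := by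
    intro x hx
    rw [← himage] at hx
    obtain ⟨y, hy, rfl⟩ := hx
    rwa [h.symm_apply_apply]
  have hfix_symm : ∀ x ∈ Arc x₀ b, h.symm x ≠ x := fun x hx hx' =>
    hfix x hx (h.symm_apply_eq.1 hx').symm
  rcases forall_lt_icoLift_or_forall_icoLift_lt h.continuous hmaps hfix with hfwd | hbwd
  · exact Or.inl fun p hp => ⟨tendsto_iterate_of_forall_lt_icoLift h.continuous hmaps hfix hfwd hp,
      tendsto_iterate_of_forall_icoLift_lt h.symm.continuous hmaps_symm hfix_symm
        (fun x hx => by simpa using hfwd _ (hmaps_symm hx)) hp⟩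
  · exact Or.inr fun p hp => ⟨tendsto_iterate_of_forall_icoLift_lt h.continuous hmaps hfix hbwd hp,
      tendsto_iterate_of_forall_lt_icoLift h.symm.continuous hmaps_symm hfix_symm
        (fun x hx => by simpa using hbwd _ (hmaps_symm hx)) hp⟩

theorem dynamics_on_fixed_point_free_arc
    (h : UnitAddCircle ≃ₜ UnitAddCircle) (hOP : OrientationPreserving h)
    (a b : UnitAddCircle) (hab : a ≠ b) (ha : h a = a) (hb : h b = b)
    (J : Set UnitAddCircle) (hJ : J = Arc a b) (hJne : J.Nonempty)
    (hnofix : ∀ x ∈ J, h x ≠ x) :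
    h '' J = J ∧
      Xor'
        (∀ p ∈ J, Tendsto (fun n => (⇑h)^[n] p) atTop (𝓝 b) ∧
          Tendsto (fun n => (⇑h.symm)^[n] p) atTop (𝓝 a))
        (∀ p ∈ J, Tendsto (fun n => (⇑h)^[n] p) atTop (𝓝 a) ∧
          Tendsto (fun n => (⇑h.symm)^[n] p) atTop (𝓝 b)) := by
  subst hJ
  obtain ⟨x₀, rfl⟩ := QuotientAddGroup.mk_surjective a
  obtain ⟨p, hp⟩ := hJne
  have himage := image_arc_eq hOP ha hb
  refine ⟨himage, ?_⟩
  rcases tendsto_iterate_of_image_arc_eq himage hnofix with hP | hQ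
  · exact Or.inl ⟨hP, fun hQ => hab (tendsto_nhds_unique (hQ p hp).1 (hP p hp).1)⟩
  · exact Or.inr ⟨hQ, fun hP => hab (tendsto_nhds_unique (hQ p hp).1 (hP p hp).1)⟩
end
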